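/- arXiv:2603.23645 — 4 statements merged into one kernel-verified Lean document; each statement's English description precedes it below -/
import Mathlib

section
/- Let 𝒮 be an η-sparse family of intervals in ℝ (i.e., for each I ∈ 𝒮 there is a measurable E_I ⊂ I with |E_I| ≥ η|I| and the E_I pairwise disjoint). Then for every 1 < r < ∞ and all locally integrable F, G, the sparse form Λ_𝒮(F,G) := Σ_{I ∈ 𝒮} ⟨|F|⟩_I ⟨|G|⟩_I |I| satisfies Λ_𝒮(F,G) ≤ C(r,η) ‖F‖_{L^r(ℝ)} ‖G‖_{L^{r'}(ℝ)}, where 1/r + 1/r' = 1 and ⟨H⟩_I denotes the average of H over I. -/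
/-!
Since `|I| ≤ η⁻¹ |E_I|`, the sparse form is at most `η⁻¹ ∑ |E_I| ⟨|F|⟩_I ⟨|G|⟩_I`, and Hölder's
inequality for the weights `|E_I|` reduces the theorem to the Carleson embedding
`∑ |E_I| ⟨f⟩_I ^ r ≤ C ∫ f ^ r`. For this, sort the intervals dyadically by their averages. If
`⟨f⟩_I ≥ 2 · 2^k`, then `f` cut off below `2^k` still has average at least `2^k` on `I`, so by the
Vitali covering lemma these intervals cover a set of measure at most `4 · 2^(-k) ∫_{f > 2^k} f`,
which bounds the total measure of their disjoint subsets `E_I`. Summing over `k` with weights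
`2^(kr)` leaves at each point the geometric series `∑_{2^k < f} 2^(k(r-1)) ≲ f^(r-1)`.
-/

open MeasureTheory Set ENNReal

theorem tsum_ite_zpow_lt_rpow_le {s : ℝ} (hs : 0 < s) (y : ℝ≥0∞) :
    ∑' k : ℤ, (if (2 : ℝ≥0∞) ^ k < y then ((2 : ℝ≥0∞) ^ k) ^ s else 0) ≤
      (1 - 2 ^ (-s))⁻¹ * y ^ s := by
  rcases eq_or_ne y ⊤ with rfl | hy
  · rw [top_rpow_of_pos hs, mul_top (by simp)]
    exact le_top
  rcases eq_or_ne y 0 with rfl | hy0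
  · simp
  obtain ⟨n, hn, hn'⟩ := exists_mem_Ico_zpow hy0 hy one_lt_two ofNat_ne_top
  have hsupp : Function.support (fun k : ℤ => if (2 : ℝ≥0∞) ^ k < y then ((2 : ℝ≥0∞) ^ k) ^ s
      else 0) ⊆ range (fun m : ℕ => n - m) := by
    intro k hk
    have hky : (2 : ℝ≥0∞) ^ k < y := by
      by_contra h
      simp [h] at hk
    have hkn : k ≤ n := by
      by_contra! h
      exact (hky.trans hn').not_ge (zpow_le_of_le one_le_two (by omega))
    exact ⟨(n - k).toNat, by simp only; omega⟩
  have hinj : (fun m : ℕ => n - m).Injective := fun m₁ m₂ h => by simpa using h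
  have hpow : ∀ k : ℤ, ((2 : ℝ≥0∞) ^ k) ^ s = 2 ^ ((k : ℝ) * s) := fun k => by
    rw [← rpow_intCast, ← rpow_mul]
  rw [← hinj.tsum_eq hsupp]
  calc ∑' m : ℕ, (if (2 : ℝ≥0∞) ^ (n - m) < y then ((2 : ℝ≥0∞) ^ (n - m)) ^ s else 0)
      ≤ ∑' m : ℕ, ((2 : ℝ≥0∞) ^ n) ^ s * (2 ^ (-s)) ^ m := by
        refine ENNReal.tsum_le_tsum fun m => ?_
        split_ifs
        · apply le_of_eq
          rw [hpow, hpow, ← rpow_natCast, ← rpow_mul, ← rpow_add _ _ two_ne_zero ofNat_ne_top]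
          congr 1
          push_cast
          ring
        · exact zero_le
    _ = ((2 : ℝ≥0∞) ^ n) ^ s * (1 - 2 ^ (-s))⁻¹ := by
        rw [ENNReal.tsum_mul_left, ENNReal.tsum_geometric]
    _ ≤ (1 - 2 ^ (-s))⁻¹ * y ^ s := by
        rw [mul_comm]
        gcongr

theorem rpow_le_mul_tsum_ite_two_mul_zpow_le {r : ℝ} (hr : 0 < r) {y : ℝ≥0∞} (hy : y ≠ ⊤) :
    y ^ r ≤ 4 ^ r * ∑' k : ℤ, (if 2 * (2 : ℝ≥0∞) ^ k ≤ y then ((2 : ℝ≥0∞) ^ k) ^ r else 0) := by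
  rcases eq_or_ne y 0 with rfl | hy0
  · simp [zero_rpow_of_pos hr]
  obtain ⟨n, hn, hn'⟩ := exists_mem_Ico_zpow hy0 hy one_lt_two ofNat_ne_top
  have hpow : ∀ j : ℕ, (2 : ℝ≥0∞) ^ (n - 1 + j) = 2 ^ j * 2 ^ (n - 1) := fun j => by
    rw [ENNReal.zpow_add two_ne_zero ofNat_ne_top, zpow_natCast, mul_comm]
  have hlevel : 2 * (2 : ℝ≥0∞) ^ (n - 1) ≤ y := by
    have h1 := hpow 1
    rw [Nat.cast_one, sub_add_cancel, pow_one] at h1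
    exact h1 ▸ hn
  calc y ^ r ≤ ((2 : ℝ≥0∞) ^ (n + 1)) ^ r := rpow_le_rpow hn'.le hr.le
    _ = 4 ^ r * ((2 : ℝ≥0∞) ^ (n - 1)) ^ r := by
        rw [show n + 1 = n - 1 + (2 : ℕ) by omega, hpow, mul_rpow_of_nonneg _ _ hr.le]
        norm_num
    _ ≤ 4 ^ r * ∑' k : ℤ, (if 2 * (2 : ℝ≥0∞) ^ k ≤ y then ((2 : ℝ≥0∞) ^ k) ^ r else 0) := by
        gcongr
        simpa [hlevel] using ENNReal.le_tsum (f := fun k : ℤ =>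
          if 2 * (2 : ℝ≥0∞) ^ k ≤ y then ((2 : ℝ≥0∞) ^ k) ^ r else 0) (n - 1)

theorem tsum_mul_rpow_le_tsum_zpow_rpow_mul_tsum {ι : Type*} {r : ℝ} (hr : 0 < r)
    (w : ι → ℝ≥0∞) {A : ι → ℝ≥0∞} (hA : ∀ i, A i ≠ ⊤) :
    ∑' i, w i * A i ^ r ≤
      4 ^ r * ∑' k : ℤ, ((2 : ℝ≥0∞) ^ k) ^ r * ∑' i : {i | 2 * 2 ^ k ≤ A i}, w i := by
  calc ∑' i, w i * A i ^ r
      ≤ ∑' i, w i *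
          (4 ^ r * ∑' k : ℤ, if 2 * (2 : ℝ≥0∞) ^ k ≤ A i then ((2 : ℝ≥0∞) ^ k) ^ r else 0) :=
        ENNReal.tsum_le_tsum fun i =>
          mul_le_mul_right (rpow_le_mul_tsum_ite_two_mul_zpow_le hr (hA i)) _
    _ = 4 ^ r * ∑' k : ℤ, ((2 : ℝ≥0∞) ^ k) ^ r * ∑' i : {i | 2 * 2 ^ k ≤ A i}, w i := by
        have hsub : ∀ k : ℤ, ∑' i : {i | 2 * 2 ^ k ≤ A i}, w i =
            ∑' i, {i | 2 * 2 ^ k ≤ A i}.indicator w i := fun k => tsum_subtype _ w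
        simp_rw [hsub, ← ENNReal.tsum_mul_left]
        rw [ENNReal.tsum_comm]
        refine tsum_congr fun k => tsum_congr fun i => ?_
        by_cases hi : 2 * (2 : ℝ≥0∞) ^ k ≤ A i
        · rw [if_pos hi, indicator_of_mem (s := {i | 2 * 2 ^ k ≤ A i}) hi]
          ring
        · rw [if_neg hi, indicator_of_notMem (s := {i | 2 * 2 ^ k ≤ A i}) hi]
          simp

theorem tsum_zpow_rpow_mul_div_mul_ite_lt_le {r : ℝ} (hr : 1 < r) (y : ℝ≥0∞) :
    ∑' k : ℤ, ((2 : ℝ≥0∞) ^ k) ^ r * (4 / 2 ^ k) * (if (2 : ℝ≥0∞) ^ k < y then y else 0) ≤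
      4 * (1 - 2 ^ (1 - r))⁻¹ * y ^ r := by
  have hterm : ∀ k : ℤ,
      ((2 : ℝ≥0∞) ^ k) ^ r * (4 / 2 ^ k) * (if (2 : ℝ≥0∞) ^ k < y then y else 0) =
        4 * ((if (2 : ℝ≥0∞) ^ k < y then ((2 : ℝ≥0∞) ^ k) ^ (r - 1) else 0) * y) := fun k => by
    have h0 : (2 : ℝ≥0∞) ^ k ≠ 0 := (zpow_pos two_ne_zero ofNat_ne_top k).ne'
    split_ifs
    · rw [rpow_sub _ _ h0 (zpow_ne_top two_ne_zero ofNat_ne_top k), rpow_one,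
        div_eq_mul_inv, div_eq_mul_inv]
      ring
    · simp
  have hy : y ^ (r - 1) * y = y ^ r := by
    conv_rhs => rw [← sub_add_cancel r 1, rpow_add_of_nonneg _ _ (by linarith) zero_le_one,
      rpow_one]
  calc ∑' k : ℤ, ((2 : ℝ≥0∞) ^ k) ^ r * (4 / 2 ^ k) * (if (2 : ℝ≥0∞) ^ k < y then y else 0)
      = 4 * ((∑' k : ℤ, if (2 : ℝ≥0∞) ^ k < y then ((2 : ℝ≥0∞) ^ k) ^ (r - 1) else 0) * y) := by
        rw [tsum_congr hterm, ENNReal.tsum_mul_left, ENNReal.tsum_mul_right]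
    _ ≤ 4 * ((1 - 2 ^ (1 - r))⁻¹ * y ^ (r - 1) * y) := by
        gcongr
        simpa only [neg_sub] using tsum_ite_zpow_lt_rpow_le (sub_pos.mpr hr) y
    _ = 4 * (1 - 2 ^ (1 - r))⁻¹ * y ^ r := by
        rw [mul_assoc _ (y ^ (r - 1)), hy, mul_assoc]

theorem mul_measure_le_setLIntegral_indicator_lt {α : Type*} [MeasurableSpace α] {μ : Measure α}
    {A : Set α} {f : α → ℝ≥0∞} {s t : ℝ≥0∞} (ht : t * μ A ≠ ⊤)
    (h : (s + t) * μ A ≤ ∫⁻ x in A, f x ∂μ) :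
    s * μ A ≤ ∫⁻ x in A, {x | t < f x}.indicator f x ∂μ := by
  have hsplit : ∀ x, f x ≤ {x | t < f x}.indicator f x + t := fun x => by
    by_cases hx : t < f x
    · simp [hx]
    · simpa [hx] using not_lt.mp hx
  have : (s + t) * μ A ≤ (∫⁻ x in A, {x | t < f x}.indicator f x ∂μ) + t * μ A :=
    h.trans <| (lintegral_mono hsplit).trans_eq <| by
      rw [lintegral_add_right _ measurable_const, setLIntegral_const]
  rw [add_mul] at this
  exact (ENNReal.add_le_add_iff_right ht).mp this

theorem volume_biUnion_Icc_le_of_mul_volume_le_setLIntegral {ι : Type*} [Countable ι]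
    (a b : ι → ℝ) (φ : ℝ → ℝ≥0∞) {t : ℝ≥0∞} (ht0 : t ≠ 0) (ht : t ≠ ⊤) {T : Set ι}
    (hT : ∀ i ∈ T, t * volume (Icc (a i) (b i)) ≤ ∫⁻ x in Icc (a i) (b i), φ x) :
    volume (⋃ i ∈ T, Icc (a i) (b i)) ≤ 4 / t * ∫⁻ x, φ x := by
  rcases eq_or_ne (∫⁻ x, φ x) ⊤ with hφ | hφ
  · simp [hφ, mul_top, ENNReal.div_eq_zero_iff, ht]
  have hlen : ∀ i ∈ T, volume (Icc (a i) (b i)) ≤ (∫⁻ x in Icc (a i) (b i), φ x) / t :=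
    fun i hi => (ENNReal.le_div_iff_mul_le (.inl ht0) (.inl ht)).mpr (mul_comm t _ ▸ hT i hi)
  set R := ((∫⁻ x, φ x) / t).toReal
  have hrad : ∀ i ∈ T, (b i - a i) / 2 ≤ R := fun i hi => by
    have hR : volume (Icc (a i) (b i)) ≤ (∫⁻ x, φ x) / t :=
      (hlen i hi).trans (ENNReal.div_le_div_right (setLIntegral_le_lintegral _ _) t)
    rw [Real.volume_Icc, ENNReal.ofReal_le_iff_le_toReal (ENNReal.div_ne_top hφ ht0)] at hR
    linarith [ENNReal.toReal_nonneg (a := (∫⁻ x, φ x) / t)]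
  have hball : ∀ i, Metric.closedBall ((a i + b i) / 2) ((b i - a i) / 2) = Icc (a i) (b i) :=
    fun i => by rw [Real.closedBall_eq_Icc]; congr 1 <;> ring
  obtain ⟨u, huT, hudisj, hucov⟩ := Vitali.exists_disjoint_subfamily_covering_enlargement_closedBall
    T (fun i => (a i + b i) / 2) (fun i => (b i - a i) / 2) R hrad 4 (by norm_num)
  simp only [hball] at hudisj hucov
  have hcov : (⋃ i ∈ T, Icc (a i) (b i)) ⊆
      ⋃ j ∈ u, Metric.closedBall ((a j + b j) / 2) (4 * ((b j - a j) / 2)) := by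
    simp only [iUnion_subset_iff]
    intro i hi
    obtain ⟨j, hj, hsub⟩ := hucov i hi
    exact hsub.trans (subset_biUnion_of_mem (u := fun j =>
      Metric.closedBall ((a j + b j) / 2) (4 * ((b j - a j) / 2))) hj)
  calc volume (⋃ i ∈ T, Icc (a i) (b i))
      ≤ ∑' j : u, volume (Metric.closedBall ((a j + b j) / 2) (4 * ((b j - a j) / 2))) :=
        (measure_mono hcov).trans (measure_biUnion_le volume u.to_countable _)
    _ = ∑' j : u, 4 * volume (Icc (a j) (b j)) := by
        congr! 2 with j
        rw [Real.volume_closedBall, Real.volume_Icc, ← ENNReal.ofReal_ofNat 4,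
          ← ENNReal.ofReal_mul (by norm_num)]
        ring_nf
    _ ≤ ∑' j : u, 4 / t * ∫⁻ x in Icc (a j) (b j), φ x := by
        refine ENNReal.tsum_le_tsum fun j => ?_
        rw [ENNReal.mul_comm_div]
        exact mul_le_mul_right (hlen j (huT j.2)) 4
    _ = 4 / t * ∫⁻ x in ⋃ j : u, Icc (a j) (b j), φ x := by
        rw [ENNReal.tsum_mul_left, lintegral_iUnion (fun _ => measurableSet_Icc)]
        exact fun j k hjk => hudisj j.2 k.2 (Subtype.coe_ne_coe.mpr hjk)
    _ ≤ 4 / t * ∫⁻ x, φ x := mul_le_mul_right (setLIntegral_le_lintegral _ _) _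

theorem volume_biUnion_Icc_le_of_two_mul_le_setLAverage {ι : Type*} [Countable ι]
    (a b : ι → ℝ) (f : ℝ → ℝ≥0∞) {t : ℝ≥0∞} (ht0 : t ≠ 0) (ht : t ≠ ⊤) {T : Set ι}
    (hT : ∀ i ∈ T, 2 * t ≤ ⨍⁻ x in Icc (a i) (b i), f x ∂volume) :
    volume (⋃ i ∈ T, Icc (a i) (b i)) ≤ 4 / t * ∫⁻ x, {x | t < f x}.indicator f x := by
  refine volume_biUnion_Icc_le_of_mul_volume_le_setLIntegral a b _ ht0 ht fun i hi => ?_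
  have hfin : volume (Icc (a i) (b i)) ≠ ⊤ := measure_Icc_lt_top.ne
  refine mul_measure_le_setLIntegral_indicator_lt (mul_ne_top ht hfin) ?_
  rcases eq_or_ne (volume (Icc (a i) (b i))) 0 with h0 | h0
  · simp [h0]
  rw [← two_mul, ← ENNReal.le_div_iff_mul_le (.inl h0) (.inl hfin), ← setLAverage_eq]
  exact hT i hi

theorem setLIntegral_ne_top_of_lintegral_rpow_ne_top {α : Type*} [MeasurableSpace α]
    {μ : Measure α} {s : Set α} (hs : μ s ≠ ⊤) {f : α → ℝ≥0∞} {r : ℝ} (hr : 1 ≤ r)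
    (hf : ∫⁻ x, f x ^ r ∂μ ≠ ⊤) : ∫⁻ x in s, f x ∂μ ≠ ⊤ := by
  have hle : ∀ x, f x ≤ 1 + f x ^ r := fun x => by
    rcases le_total (f x) 1 with h | h
    · exact le_add_right h
    · exact le_add_left (by simpa using rpow_le_rpow_of_exponent_le h hr)
  refine ne_top_of_le_ne_top ?_ (lintegral_mono hle)
  rw [lintegral_add_left measurable_const, setLIntegral_const, one_mul]
  exact add_ne_top.mpr ⟨hs, ne_top_of_le_ne_top hf (setLIntegral_le_lintegral _ _)⟩

noncomputable def carlesonConst (r : ℝ) : ℝ≥0∞ := 4 ^ (r + 1) * (1 - 2 ^ (1 - r))⁻¹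

theorem carlesonConst_ne_top {r : ℝ} (hr : 1 < r) : carlesonConst r ≠ ⊤ :=
  mul_ne_top (rpow_ne_top_of_nonneg (by linarith) ofNat_ne_top) <| inv_ne_top.mpr
    (tsub_pos_of_lt (ENNReal.rpow_lt_one_of_one_lt_of_neg one_lt_two (by linarith))).ne'

theorem tsum_mul_setLAverage_rpow_le {ι : Type*} [Countable ι] {r : ℝ} (hr : 1 < r)
    {a b : ι → ℝ} {E : ι → Set ℝ} (hE : ∀ i, MeasurableSet (E i))
    (hEI : ∀ i, E i ⊆ Icc (a i) (b i)) (hEd : Pairwise (Function.onFun Disjoint E))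
    {f : ℝ → ℝ≥0∞} (hf : AEMeasurable f) :
    ∑' i, volume (E i) * (⨍⁻ x in Icc (a i) (b i), f x ∂volume) ^ r ≤
      carlesonConst r * ∫⁻ x, f x ^ r := by
  set A := fun i => ⨍⁻ x in Icc (a i) (b i), f x ∂volume
  set T : ℤ → Set ι := fun k => {i | 2 * 2 ^ k ≤ A i}
  have hr0 : 0 < r := zero_lt_one.trans hr
  have h2k : ∀ k : ℤ, (2 : ℝ≥0∞) ^ k ≠ 0 := fun k => (zpow_pos two_ne_zero ofNat_ne_top k).ne'
  have h2k' : ∀ k : ℤ, (2 : ℝ≥0∞) ^ k ≠ ⊤ := zpow_ne_top two_ne_zero ofNat_ne_top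
  rcases eq_or_ne (∫⁻ x, f x ^ r) ⊤ with hfr | hfr
  · simp [hfr, carlesonConst, mul_top]
  have hA : ∀ i, A i ≠ ⊤ := fun i => (setLAverage_lt_top <|
    setLIntegral_ne_top_of_lintegral_rpow_ne_top measure_Icc_lt_top.ne hr.le hfr).ne
  have hlevel : ∀ k : ℤ, ∑' i : T k, volume (E i) ≤
      4 / 2 ^ k * ∫⁻ x, {x | 2 ^ k < f x}.indicator f x := fun k => by
    rw [← measure_biUnion (T k).to_countable (hEd.set_pairwise _) fun i _ => hE i]
    exact (measure_mono (biUnion_mono subset_rfl fun i _ => hEI i)).trans <|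
      volume_biUnion_Icc_le_of_two_mul_le_setLAverage a b f (h2k k) (h2k' k) fun _ hi => hi
  have hmeas : ∀ k : ℤ, AEMeasurable (fun x => ((2 : ℝ≥0∞) ^ k) ^ r * (4 / 2 ^ k) *
      {x | 2 ^ k < f x}.indicator f x) := fun k =>
    ((measurable_id.indicator measurableSet_Ioi).comp_aemeasurable hf).const_mul _
  calc ∑' i, volume (E i) * A i ^ r
      ≤ 4 ^ r * ∑' k : ℤ, ((2 : ℝ≥0∞) ^ k) ^ r * ∑' i : T k, volume (E i) :=
        tsum_mul_rpow_le_tsum_zpow_rpow_mul_tsum hr0 _ hA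
    _ ≤ 4 ^ r * ∑' k : ℤ, ((2 : ℝ≥0∞) ^ k) ^ r *
          (4 / 2 ^ k * ∫⁻ x, {x | 2 ^ k < f x}.indicator f x) := by
        gcongr with k
        exact hlevel k
    _ = 4 ^ r * ∫⁻ x, ∑' k : ℤ, ((2 : ℝ≥0∞) ^ k) ^ r * (4 / 2 ^ k) *
          {x | 2 ^ k < f x}.indicator f x := by
        rw [lintegral_tsum hmeas]
        refine congrArg _ (tsum_congr fun k => ?_)
        rw [lintegral_const_mul' _ _ (mul_ne_top (rpow_ne_top_of_nonneg hr0.le (h2k' k))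
          (div_ne_top ofNat_ne_top (h2k k))), mul_assoc]
    _ ≤ 4 ^ r * ∫⁻ x, 4 * (1 - 2 ^ (1 - r))⁻¹ * f x ^ r := by
        gcongr with x
        simpa only [indicator_apply, mem_ofPred_eq] using
          tsum_zpow_rpow_mul_div_mul_ite_lt_le hr (f x)
    _ = carlesonConst r * ∫⁻ x, f x ^ r := by
        rw [lintegral_const_mul'' _ (hf.pow_const r), carlesonConst,
          rpow_add _ _ (by norm_num) ofNat_ne_top, rpow_one]
        ring

theorem tsum_mul_mul_le_tsum_mul_rpow_mul_tsum_mul_rpow {ι : Type*} {p q : ℝ}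
    (hpq : p.HolderConjugate q) (w f g : ι → ℝ≥0∞) :
    ∑' i, w i * (f i * g i) ≤
      (∑' i, w i * f i ^ p) ^ (1 / p) * (∑' i, w i * g i ^ q) ^ (1 / q) := by
  let _ : MeasurableSpace ι := ⊤
  have : MeasurableSingletonClass ι := ⟨fun _ => trivial⟩
  have hsum : ∀ h : ι → ℝ≥0∞, ∑' i, w i * h i = ∫⁻ i, h i ∂Measure.count.withDensity w :=
    fun h => by
      rw [lintegral_withDensity_eq_lintegral_mul _ measurable_from_top measurable_from_top,
        lintegral_count]
      rfl
  simpa only [hsum, Pi.mul_apply] using ENNReal.lintegral_mul_le_Lp_mul_Lq _ hpq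
    measurable_from_top.aemeasurable measurable_from_top.aemeasurable

theorem tsum_mul_setLAverage_enorm_rpow_le_eLpNorm {ι : Type*} [Countable ι] {p : ℝ≥0∞}
    (hp : 1 < p.toReal) {a b : ι → ℝ} {E : ι → Set ℝ} (hE : ∀ i, MeasurableSet (E i))
    (hEI : ∀ i, E i ⊆ Icc (a i) (b i)) (hEd : Pairwise (Function.onFun Disjoint E))
    {F : ℝ → ℝ} (hF : AEStronglyMeasurable F) :
    (∑' i, volume (E i) * (⨍⁻ x in Icc (a i) (b i), ‖F x‖ₑ ∂volume) ^ p.toReal) ^ (1 / p.toReal)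
      ≤ carlesonConst p.toReal ^ (1 / p.toReal) * eLpNorm F p volume := by
  obtain ⟨hp0, hpt⟩ := toReal_pos_iff.mp (zero_lt_one.trans hp)
  rw [eLpNorm_eq_lintegral_rpow_enorm_toReal hp0.ne' hpt.ne,
    ← mul_rpow_of_nonneg _ _ (by positivity)]
  exact rpow_le_rpow (tsum_mul_setLAverage_rpow_le hp hE hEI hEd hF.enorm) (by positivity)

theorem tsum_mul_setLAverage_mul_setLAverage_le {ι : Type*} [Countable ι] {p q : ℝ≥0∞}
    (hpq : p.toReal.HolderConjugate q.toReal) {a b : ι → ℝ} {E : ι → Set ℝ}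
    (hE : ∀ i, MeasurableSet (E i)) (hEI : ∀ i, E i ⊆ Icc (a i) (b i))
    (hEd : Pairwise (Function.onFun Disjoint E)) {F G : ℝ → ℝ} (hF : AEStronglyMeasurable F)
    (hG : AEStronglyMeasurable G) :
    ∑' i, volume (E i) * ((⨍⁻ x in Icc (a i) (b i), ‖F x‖ₑ ∂volume) *
        ⨍⁻ x in Icc (a i) (b i), ‖G x‖ₑ ∂volume) ≤
      carlesonConst p.toReal ^ (1 / p.toReal) * eLpNorm F p volume *
        (carlesonConst q.toReal ^ (1 / q.toReal) * eLpNorm G q volume) :=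
  (tsum_mul_mul_le_tsum_mul_rpow_mul_tsum_mul_rpow hpq _ _ _).trans <| mul_le_mul'
    (tsum_mul_setLAverage_enorm_rpow_le_eLpNorm hpq.lt hE hEI hEd hF)
    (tsum_mul_setLAverage_enorm_rpow_le_eLpNorm hpq.symm.lt hE hEI hEd hG)

theorem setLIntegral_mul_setLIntegral_div_le {α : Type*} [MeasurableSpace α] {μ : Measure α}
    {I E : Set α} (hI : μ I ≠ ⊤) {c : ℝ≥0∞} (hc : c ≠ 0) (hc' : c ≠ ⊤) (hcE : c * μ I ≤ μ E)
    (f g : α → ℝ≥0∞) :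
    (∫⁻ x in I, f x ∂μ) * (∫⁻ x in I, g x ∂μ) / μ I ≤
      c⁻¹ * (μ E * ((⨍⁻ x in I, f x ∂μ) * ⨍⁻ x in I, g x ∂μ)) := by
  rcases eq_or_ne (μ I) 0 with h0 | h0
  · simp [Measure.restrict_eq_zero.mpr h0]
  calc (∫⁻ x in I, f x ∂μ) * (∫⁻ x in I, g x ∂μ) / μ I
      = μ I * ((∫⁻ x in I, f x ∂μ) / μ I) * ((∫⁻ x in I, g x ∂μ) / μ I) := by
        rw [ENNReal.mul_div_cancel h0 hI, mul_div_assoc]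
    _ = μ I * ((⨍⁻ x in I, f x ∂μ) * ⨍⁻ x in I, g x ∂μ) := by
        rw [setLAverage_eq, setLAverage_eq, mul_assoc]
    _ ≤ c⁻¹ * μ E * ((⨍⁻ x in I, f x ∂μ) * ⨍⁻ x in I, g x ∂μ) :=
        mul_le_mul_left ((mul_le_iff_le_inv hc hc').mp hcE) _
    _ = c⁻¹ * (μ E * ((⨍⁻ x in I, f x ∂μ) * ⨍⁻ x in I, g x ∂μ)) := mul_assoc _ _ _

theorem stmt4_general (η : ℝ) (hη0 : 0 < η)
    (p q : ℝ≥0∞) (hp1 : 1 < p) (hpt : p ≠ ⊤) (hpq : 1 / p + 1 / q = 1) :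
    ∃ C : ℝ≥0∞, C ≠ ⊤ ∧
      ∀ (a b : ℕ → ℝ) (_ : ∀ i, a i ≤ b i) (E : ℕ → Set ℝ)
        (_ : ∀ i, MeasurableSet (E i))
        (_ : ∀ i, E i ⊆ Set.Icc (a i) (b i))
        (_ : Pairwise (Function.onFun Disjoint E))
        (_ : ∀ i, ENNReal.ofReal (η * (b i - a i)) ≤ volume (E i))
        (F G : ℝ → ℝ) (_ : Measurable F) (_ : Measurable G)
        (_ : MemLp F p volume) (_ : MemLp G q volume),
        (∑' i : ℕ,
          (∫⁻ t in Set.Icc (a i) (b i), (‖F t‖₊ : ℝ≥0∞)) *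
            (∫⁻ t in Set.Icc (a i) (b i), (‖G t‖₊ : ℝ≥0∞)) /
              ENNReal.ofReal (b i - a i))
          ≤ C * eLpNorm F p volume * eLpNorm G q volume := by
  have : p.HolderConjugate q := holderConjugate_iff.mpr (by simpa only [one_div] using hpq)
  have hqt : q ≠ ⊤ := (HolderConjugate.ne_top_iff_ne_one q p).mpr hp1.ne'
  have hpq' := HolderConjugate.toReal_of_ne_top hpt hqt
  have hη : ENNReal.ofReal η ≠ 0 := (ENNReal.ofReal_pos.mpr hη0).ne'
  refine ⟨(ENNReal.ofReal η)⁻¹ * carlesonConst p.toReal ^ (1 / p.toReal) *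
    carlesonConst q.toReal ^ (1 / q.toReal), ?_, ?_⟩
  · exact mul_ne_top (mul_ne_top (inv_ne_top.mpr hη)
      (rpow_ne_top_of_nonneg (by positivity) (carlesonConst_ne_top hpq'.lt)))
      (rpow_ne_top_of_nonneg (by positivity) (carlesonConst_ne_top hpq'.symm.lt))
  intro a b _ E hE hEI hEd hsparse F G _ _ hF hG
  calc _ ≤ ∑' i, (ENNReal.ofReal η)⁻¹ * (volume (E i) *
          ((⨍⁻ x in Icc (a i) (b i), ‖F x‖ₑ ∂volume) * ⨍⁻ x in Icc (a i) (b i), ‖G x‖ₑ ∂volume)) :=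
        ENNReal.tsum_le_tsum fun i => Real.volume_Icc ▸
          setLIntegral_mul_setLIntegral_div_le measure_Icc_lt_top.ne hη ofReal_ne_top
            (by rw [Real.volume_Icc, ← ENNReal.ofReal_mul hη0.le]; exact hsparse i) _ _
    _ ≤ (ENNReal.ofReal η)⁻¹ * (carlesonConst p.toReal ^ (1 / p.toReal) * eLpNorm F p volume *
          (carlesonConst q.toReal ^ (1 / q.toReal) * eLpNorm G q volume)) := by
        rw [ENNReal.tsum_mul_left]
        gcongr
        exact tsum_mul_setLAverage_mul_setLAverage_le hpq' hE hEI hEd hF.1 hG.1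
    _ = _ := by ring

/-- `L^p × L^q` bound for sparse forms. For every `η ∈ (0,1)` and dual
exponents `1 < p < ∞`, `1/p + 1/q = 1`, there is a constant `C = C(p,η)` such that
for every `η`-sparse family of intervals `Icc (a i) (b i)` (with disjoint major sets
`E i`) and all `F ∈ L^p`, `G ∈ L^q`, the sparse form
`Σ_i ⟨|F|⟩_{I i} ⟨|G|⟩_{I i} |I i|` is at most `C ‖F‖_{L^p} ‖G‖_{L^q}`. -/
theorem stmt4 (η : ℝ) (hη0 : 0 < η) (hη1 : η < 1)
    (p q : ℝ≥0∞) (hp1 : 1 < p) (hpt : p ≠ ⊤) (hpq : 1 / p + 1 / q = 1) :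
    ∃ C : ℝ≥0∞, C ≠ ⊤ ∧
      ∀ (a b : ℕ → ℝ) (_ : ∀ i, a i ≤ b i) (E : ℕ → Set ℝ)
        (_ : ∀ i, MeasurableSet (E i))
        (_ : ∀ i, E i ⊆ Set.Icc (a i) (b i))
        (_ : Pairwise (Function.onFun Disjoint E))
        (_ : ∀ i, ENNReal.ofReal (η * (b i - a i)) ≤ volume (E i))
        (F G : ℝ → ℝ) (_ : Measurable F) (_ : Measurable G)
        (_ : MemLp F p volume) (_ : MemLp G q volume),
        (∑' i : ℕ,
          (∫⁻ t in Set.Icc (a i) (b i), (‖F t‖₊ : ℝ≥0∞)) *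
            (∫⁻ t in Set.Icc (a i) (b i), (‖G t‖₊ : ℝ≥0∞)) /
              ENNReal.ofReal (b i - a i))
          ≤ C * eLpNorm F p volume * eLpNorm G q volume :=
  stmt4_general η hη0 p q hp1 hpt hpq
end

section
/- Let 𝒮 be an η-sparse family of intervals. Then for all locally integrable F, G, Λ_𝒮(F,G) ≤ η⁻¹ ∫_ℝ M(|F|)(x) · M(|G|)(x) dx, where M is the Hardy–Littlewood maximal operator over intervals. -/
open MeasureTheory Set ENNReal

/-- The Hardy–Littlewood maximal operator over intervals of `ℝ`. -/
noncomputable def maximalInt (F : ℝ → ℝ) (x : ℝ) : ℝ≥0∞ :=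
  ⨆ (a : ℝ) (b : ℝ) (_ : x ∈ Set.Icc a b),
    (∫⁻ t in Set.Icc a b, (‖F t‖₊ : ℝ≥0∞)) / ENNReal.ofReal (b - a)

lemma le_maximalInt (F : ℝ → ℝ) {x a b : ℝ} (hx : x ∈ Set.Icc a b) :
    (∫⁻ t in Set.Icc a b, (‖F t‖₊ : ℝ≥0∞)) / ENNReal.ofReal (b - a) ≤ maximalInt F x :=
  le_iSup_of_le a (le_iSup_of_le b (le_iSup_of_le hx le_rfl))

/-- For an `η`-sparse family of intervals,
`Λ_𝒮(F,G) ≤ η⁻¹ ∫_ℝ M(|F|)(x) M(|G|)(x) dx`, where `M` is the Hardy–Littlewood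
maximal operator over intervals. -/
theorem stmt5 (η : ℝ) (hη0 : 0 < η) (hη1 : η < 1)
    (a b : ℕ → ℝ) (hab : ∀ i, a i ≤ b i) (E : ℕ → Set ℝ)
    (hEm : ∀ i, MeasurableSet (E i))
    (hEsub : ∀ i, E i ⊆ Set.Icc (a i) (b i))
    (hEdisj : Pairwise (Function.onFun Disjoint E))
    (hEbig : ∀ i, ENNReal.ofReal (η * (b i - a i)) ≤ volume (E i))
    (F G : ℝ → ℝ) (hF : Measurable F) (hG : Measurable G) :
    (∑' i : ℕ,
        (∫⁻ t in Set.Icc (a i) (b i), (‖F t‖₊ : ℝ≥0∞)) *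
          (∫⁻ t in Set.Icc (a i) (b i), (‖G t‖₊ : ℝ≥0∞)) /
            ENNReal.ofReal (b i - a i))
      ≤ (ENNReal.ofReal η)⁻¹ * ∫⁻ x : ℝ, maximalInt F x * maximalInt G x := by
  have hη0' : ENNReal.ofReal η ≠ 0 := by simp [hη0, hη0.le]
  have key : ∀ i, (∫⁻ t in Set.Icc (a i) (b i), (‖F t‖₊ : ℝ≥0∞)) *
          (∫⁻ t in Set.Icc (a i) (b i), (‖G t‖₊ : ℝ≥0∞)) /
            ENNReal.ofReal (b i - a i)
      ≤ (ENNReal.ofReal η)⁻¹ * ∫⁻ x in E i, maximalInt F x * maximalInt G x := by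
    intro i
    rcases eq_or_lt_of_le (hab i) with h | h
    · have hvol : volume (Set.Icc (a i) (b i)) = 0 := by rw [← h]; simp
      rw [setLIntegral_measure_zero _ _ hvol]
      simp
    · set L := ENNReal.ofReal (b i - a i) with hLdef
      have hL0 : L ≠ 0 := by
        simp only [hLdef, ne_eq, ENNReal.ofReal_eq_zero, not_le, sub_pos]; exact h
      have hLt : L ≠ ∞ := ofReal_ne_top
      set IF := ∫⁻ t in Set.Icc (a i) (b i), (‖F t‖₊ : ℝ≥0∞) with hIF
      set IG := ∫⁻ t in Set.Icc (a i) (b i), (‖G t‖₊ : ℝ≥0∞) with hIG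
      have h1 : IF / L * (IG / L) * volume (E i) ≤
          ∫⁻ x in E i, maximalInt F x * maximalInt G x := by
        rw [← setLIntegral_const (E i) (IF / L * (IG / L))]
        refine setLIntegral_mono' (hEm i) fun x hx => ?_
        exact mul_le_mul' (le_maximalInt F (hEsub i hx)) (le_maximalInt G (hEsub i hx))
      have h2 : ENNReal.ofReal η * (IF * IG / L) = IF / L * (IG / L) * (ENNReal.ofReal η * L) := by
        simp only [div_eq_mul_inv]
        rw [show IF * L⁻¹ * (IG * L⁻¹) * (ENNReal.ofReal η * L)
            = ENNReal.ofReal η * (IF * IG * L⁻¹) * (L⁻¹ * L) from by ring,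
          ENNReal.inv_mul_cancel hL0 hLt, mul_one]
      have h3 : ENNReal.ofReal η * (IF * IG / L) ≤
          ∫⁻ x in E i, maximalInt F x * maximalInt G x := by
        rw [h2]
        refine le_trans (mul_le_mul_right ?_ _) h1
        rw [← ENNReal.ofReal_mul hη0.le] at *
        exact hEbig i
      calc IF * IG / L = (ENNReal.ofReal η)⁻¹ * (ENNReal.ofReal η * (IF * IG / L)) := by
            rw [← mul_assoc, ENNReal.inv_mul_cancel hη0' ofReal_ne_top, one_mul]
        _ ≤ _ := mul_le_mul_right h3 _
  calc (∑' i : ℕ,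
        (∫⁻ t in Set.Icc (a i) (b i), (‖F t‖₊ : ℝ≥0∞)) *
          (∫⁻ t in Set.Icc (a i) (b i), (‖G t‖₊ : ℝ≥0∞)) /
            ENNReal.ofReal (b i - a i))
      ≤ ∑' i : ℕ, (ENNReal.ofReal η)⁻¹ * ∫⁻ x in E i, maximalInt F x * maximalInt G x :=
        ENNReal.tsum_le_tsum key
    _ = (ENNReal.ofReal η)⁻¹ * ∑' i : ℕ, ∫⁻ x in E i, maximalInt F x * maximalInt G x :=
        ENNReal.tsum_mul_left
    _ = (ENNReal.ofReal η)⁻¹ * ∫⁻ x in ⋃ i, E i, maximalInt F x * maximalInt G x := by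
        rw [lintegral_iUnion hEm hEdisj]
    _ ≤ _ := mul_le_mul_right (lintegral_mono' Measure.restrict_le_self le_rfl) _
end

section
/- Let 1 < p < ∞, let θ : Ω → ℝ be measurable on a measurable set Ω ⊂ ℝⁿ, and suppose the pushforward measure ν_θ = θ_#(Lebesgue on Ω) has a density w_θ ∈ L^∞(ℝ) with respect to Lebesgue measure. For h ∈ L¹(Ω) ∩ L^p(Ω), let A_θ h be the Lebesgue density of θ_#(h dx). Then ‖A_θ h‖_{L^p(ℝ)} ≤ ‖w_θ‖_{L^∞}^{1/p'} ‖h‖_{L^p(Ω)}, where 1/p + 1/p' = 1; consequently A_θ extends uniquely to a bounded operator L^p(Ω) → L^p(ℝ) with the same norm bound. -/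
/-!
For a Borel set `E`, Hölder's inequality on the fiber set `θ⁻¹ E` gives
`‖∫_E A‖ ≤ (W |E|)^{1/p'} ρ(E)^{1/p}` with `ρ = θ_#(|h|^p dx)`, because `|θ⁻¹ E| ≤ W |E|`.
Shrinking `E` to a point along a Vitali family (Lebesgue differentiation for `A` and for `ρ`)
turns this into the pointwise bound `|A t| ≤ W^{1/p'} (dρ/dt)(t)^{1/p}` a.e., and integrating
its `p`-th power gives `‖A‖_p^p ≤ W^{p/p'} ρ(ℝ) = W^{p/p'} ‖h‖_p^p`.
-/

open MeasureTheory Set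
open scoped ENNReal

lemma ENNReal.inv_mul_mul_rpow_mul_rpow {C R v : ℝ≥0∞} (hv0 : v ≠ 0) (hvt : v ≠ ⊤) {a b : ℝ}
    (ha : 0 ≤ a) (hb : 0 ≤ b) (hab : a + b = 1) :
    v⁻¹ * ((C * v) ^ a * R ^ b) = C ^ a * (R / v) ^ b := by
  have hv : v⁻¹ ^ a * v⁻¹ ^ b = v⁻¹ := by
    rw [← ENNReal.rpow_add _ _ (ENNReal.inv_ne_zero.2 hvt) (ENNReal.inv_ne_top.2 hv0), hab,
      ENNReal.rpow_one]
  calc v⁻¹ * ((C * v) ^ a * R ^ b) = (C * v) ^ a * v⁻¹ ^ a * (R ^ b * v⁻¹ ^ b) := by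
        conv_lhs => rw [← hv]
        ring
    _ = (C * v * v⁻¹) ^ a * (R * v⁻¹) ^ b := by
        rw [ENNReal.mul_rpow_of_nonneg (C * v) _ ha, ENNReal.mul_rpow_of_nonneg R _ hb]
    _ = C ^ a * (R / v) ^ b := by
        rw [mul_assoc, ENNReal.mul_inv_cancel hv0 hvt, mul_one, div_eq_mul_inv]

section Averages

variable {α E : Type*} [MeasurableSpace α] [NormedAddCommGroup E] {μ : Measure α}

lemma enorm_setAverage_le_of_enorm_setIntegral_le [NormedSpace ℝ E] {f : α → E} {s : Set α}
    {C R : ℝ≥0∞} {a b : ℝ} (ha : 0 ≤ a) (hb : 0 ≤ b) (hab : a + b = 1)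
    (h : ‖∫ x in s, f x ∂μ‖ₑ ≤ (C * μ s) ^ a * R ^ b) :
    ‖⨍ x in s, f x ∂μ‖ₑ ≤ C ^ a * (R / μ s) ^ b := by
  -- an average over a set of measure `0` or `∞` is `0` by convention
  rcases eq_or_ne (μ s) 0 with hs0 | hs0
  · simp [setAverage_eq, measureReal_def, hs0]
  rcases eq_or_ne (μ s) ⊤ with hst | hst
  · simp [setAverage_eq, measureReal_def, hst]
  calc ‖⨍ x in s, f x ∂μ‖ₑ = (μ s)⁻¹ * ‖∫ x in s, f x ∂μ‖ₑ := by
        rw [setAverage_eq, enorm_smul, measureReal_def,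
          Real.enorm_eq_ofReal (by positivity),
          ENNReal.ofReal_inv_of_pos (ENNReal.toReal_pos hs0 hst), ENNReal.ofReal_toReal hst]
    _ ≤ (μ s)⁻¹ * ((C * μ s) ^ a * R ^ b) := by gcongr
    _ = C ^ a * (R / μ s) ^ b := ENNReal.inv_mul_mul_rpow_mul_rpow hs0 hst ha hb hab

lemma eLpNorm_ofReal_le_mul_lintegral_rpow {f : α → E} {g : α → ℝ≥0∞} (hg : AEMeasurable g μ)
    {p : ℝ} (hp : 0 < p) {K : ℝ≥0∞} (hfg : ∀ᵐ x ∂μ, ‖f x‖ₑ ≤ K * g x ^ (1 / p)) :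
    eLpNorm f (ENNReal.ofReal p) μ ≤ K * (∫⁻ x, g x ∂μ) ^ (1 / p) := by
  have hpow : ∀ c : ℝ≥0∞, (c ^ (1 / p)) ^ p = c := fun c => by
    rw [← ENNReal.rpow_mul, one_div_mul_cancel hp.ne', ENNReal.rpow_one]
  have hpow' : (K ^ p) ^ (1 / p) = K := by
    rw [← ENNReal.rpow_mul, mul_one_div_cancel hp.ne', ENNReal.rpow_one]
  rw [eLpNorm_eq_lintegral_rpow_enorm_toReal (by simpa using hp) ENNReal.ofReal_ne_top,
    ENNReal.toReal_ofReal hp.le, ← hpow', ← ENNReal.mul_rpow_of_nonneg _ _ (by positivity),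
    ← lintegral_const_mul'' _ hg]
  gcongr ?_ ^ _
  refine lintegral_mono_ae (hfg.mono fun x hx => ?_)
  calc ‖f x‖ₑ ^ p ≤ (K * g x ^ (1 / p)) ^ p := by gcongr
    _ = K ^ p * g x := by rw [ENNReal.mul_rpow_of_nonneg _ _ hp.le, hpow]

end Averages

theorem VitaliFamily.ae_enorm_le_of_enorm_setIntegral_le {α E : Type*} [MetricSpace α]
    [MeasurableSpace α] [NormedAddCommGroup E] [NormedSpace ℝ E] [CompleteSpace E]
    {μ : Measure α} (v : VitaliFamily μ) [SecondCountableTopology α] [BorelSpace α]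
    [IsLocallyFiniteMeasure μ] {ρ : Measure α} [IsLocallyFiniteMeasure ρ] {f : α → E}
    (hf : LocallyIntegrable f μ) {C : ℝ≥0∞} (hC : C ≠ ⊤) {a b : ℝ} (ha : 0 ≤ a) (hb : 0 ≤ b)
    (hab : a + b = 1)
    (h : ∀ s, MeasurableSet s → ‖∫ x in s, f x ∂μ‖ₑ ≤ (C * μ s) ^ a * ρ s ^ b) :
    ∀ᵐ x ∂μ, ‖f x‖ₑ ≤ C ^ a * ρ.rnDeriv μ x ^ b := by
  filter_upwards [v.ae_tendsto_average hf, v.ae_tendsto_rnDeriv ρ] with x hfx hρx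
  refine le_of_tendsto_of_tendsto (g := fun s => C ^ a * (ρ s / μ s) ^ b) hfx.enorm ?_ ?_
  · exact ENNReal.Tendsto.const_mul ((ENNReal.continuous_rpow_const.tendsto _).comp hρx)
      (Or.inr (ENNReal.rpow_ne_top_of_nonneg ha hC))
  · filter_upwards [v.eventually_filterAt_measurableSet x] with s hs
    exact enorm_setAverage_le_of_enorm_setIntegral_le ha hb hab (h s hs)

section Pushforward

variable {X E : Type*} [MeasurableSpace X] [NormedAddCommGroup E] {μ : Measure X}

lemma enorm_setIntegral_le_eLpNorm_mul_measure_rpow [NormedSpace ℝ E] {h : X → E} {s : Set X}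
    {p p' : ℝ} (hpp' : p.HolderConjugate p') (hh : AEStronglyMeasurable h (μ.restrict s)) :
    ‖∫ x in s, h x ∂μ‖ₑ ≤ eLpNorm h (ENNReal.ofReal p) (μ.restrict s) * μ s ^ (1 / p') := by
  refine (enorm_integral_le_lintegral_enorm _).trans ?_
  rw [← eLpNorm_one_eq_lintegral_enorm]
  refine (eLpNorm_le_eLpNorm_mul_rpow_measure_univ (q := ENNReal.ofReal p) ?_ hh).trans_eq ?_
  · simpa using hpp'.lt.le
  · rw [Measure.restrict_apply_univ, ENNReal.toReal_ofReal hpp'.nonneg, ENNReal.toReal_one,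
      one_div, one_div, one_div, inv_one, hpp'.one_sub_inv]

lemma eLpNorm_restrict_preimage {α : Type*} [MeasurableSpace α] {θ : X → α} (hθ : Measurable θ)
    {s : Set α} (hs : MeasurableSet s) (h : X → E) {p : ℝ} (hp : 0 < p) :
    eLpNorm h (ENNReal.ofReal p) (μ.restrict (θ ⁻¹' s))
      = (μ.withDensity (fun x => ‖h x‖ₑ ^ p)).map θ s ^ (1 / p) := by
  rw [eLpNorm_eq_lintegral_rpow_enorm_toReal (by simpa using hp) ENNReal.ofReal_ne_top,
    ENNReal.toReal_ofReal hp.le, Measure.map_apply hθ hs, withDensity_apply _ (hθ hs)]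

end Pushforward

theorem eLpNorm_le_of_setIntegral_eq_setIntegral_preimage {X α E : Type*} [MeasurableSpace X]
    [MetricSpace α] [MeasurableSpace α] [BorelSpace α] [SecondCountableTopology α]
    [HasBesicovitchCovering α] [NormedAddCommGroup E] [NormedSpace ℝ E] [CompleteSpace E]
    {μ : Measure X} {ν : Measure α} [IsLocallyFiniteMeasure ν] {θ : X → α} (hθ : Measurable θ)
    {c : ℝ≥0∞} (hc : c ≠ ⊤) (hθν : μ.map θ ≤ c • ν) {p p' : ℝ} (hpp' : p.HolderConjugate p')
    {h : X → E} (hh : MemLp h (ENNReal.ofReal p) μ) {A : α → E} (hA : LocallyIntegrable A ν)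
    (hAh : ∀ s, MeasurableSet s → ∫ t in s, A t ∂ν = ∫ x in θ ⁻¹' s, h x ∂μ) :
    eLpNorm A (ENNReal.ofReal p) ν ≤ c ^ (1 / p') * eLpNorm h (ENNReal.ofReal p) μ := by
  set ρ := (μ.withDensity fun x => ‖h x‖ₑ ^ p).map θ
  have hρ (s : Set α) (hs : MeasurableSet s) :
      eLpNorm h (ENNReal.ofReal p) (μ.restrict (θ ⁻¹' s)) = ρ s ^ (1 / p) :=
    eLpNorm_restrict_preimage hθ hs h hpp'.pos
  have hρuniv : ρ univ ^ (1 / p) = eLpNorm h (ENNReal.ofReal p) μ := by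
    rw [← hρ univ MeasurableSet.univ, preimage_univ, Measure.restrict_univ]
  have : IsFiniteMeasure ρ := ⟨by
    rw [← ENNReal.rpow_lt_top_iff_of_pos hpp'.one_div_pos, hρuniv]
    exact hh.eLpNorm_lt_top⟩
  have hset (s : Set α) (hs : MeasurableSet s) :
      ‖∫ t in s, A t ∂ν‖ₑ ≤ (c * ν s) ^ (1 / p') * ρ s ^ (1 / p) := by
    rw [hAh s hs, ← hρ s hs, mul_comm]
    calc ‖∫ x in θ ⁻¹' s, h x ∂μ‖ₑ
        ≤ eLpNorm h (ENNReal.ofReal p) (μ.restrict (θ ⁻¹' s)) * μ (θ ⁻¹' s) ^ (1 / p') :=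
          enorm_setIntegral_le_eLpNorm_mul_measure_rpow hpp' hh.1.restrict
      _ ≤ eLpNorm h (ENNReal.ofReal p) (μ.restrict (θ ⁻¹' s)) * (c * ν s) ^ (1 / p') := by
          rw [← Measure.map_apply hθ hs]
          gcongr
          exacts [hpp'.symm.one_div_nonneg, hθν s]
  have hA_le := (Besicovitch.vitaliFamily ν).ae_enorm_le_of_enorm_setIntegral_le hA hc
    hpp'.symm.one_div_nonneg hpp'.one_div_nonneg (by simpa [add_comm] using
      hpp'.one_div_add_one_div) hset
  calc eLpNorm A (ENNReal.ofReal p) ν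
      ≤ c ^ (1 / p') * (∫⁻ t, ρ.rnDeriv ν t ∂ν) ^ (1 / p) :=
        eLpNorm_ofReal_le_mul_lintegral_rpow (Measure.measurable_rnDeriv _ _).aemeasurable
          hpp'.pos hA_le
    _ ≤ c ^ (1 / p') * ρ univ ^ (1 / p) := by
        gcongr
        exacts [hpp'.one_div_nonneg, Measure.lintegral_rnDeriv_le]
    _ = c ^ (1 / p') * eLpNorm h (ENNReal.ofReal p) μ := by rw [hρuniv]

theorem stmt10_general {n : ℕ} (Ω : Set (Fin n → ℝ))
    (θ : (Fin n → ℝ) → ℝ) (hθ : Measurable θ)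
    (p p' : ℝ) (hp : 1 < p) (hpp' : 1 / p + 1 / p' = 1)
    (w : ℝ → ℝ)
    (W : ℝ) (hW0 : 0 ≤ W) (hwW : ∀ᵐ t : ℝ, w t ≤ W)
    (hdens : Measure.map θ (volume.restrict Ω)
      = volume.withDensity fun t => ENNReal.ofReal (w t))
    (h : (Fin n → ℝ) → ℂ)
    (hLp : MemLp h (ENNReal.ofReal p) (volume.restrict Ω))
    (A : ℝ → ℂ) (hA : Integrable A)
    (hAdens : ∀ E : Set ℝ, MeasurableSet E →
      ∫ t in E, A t = ∫ x in Ω ∩ θ ⁻¹' E, h x) :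
    eLpNorm A (ENNReal.ofReal p) volume
      ≤ ENNReal.ofReal (W ^ (1 / p'))
          * eLpNorm h (ENNReal.ofReal p) (volume.restrict Ω) := by
  have hpp'_conj : p.HolderConjugate p' :=
    Real.holderConjugate_iff.mpr ⟨hp, by simpa [one_div] using hpp'⟩
  have hθ_map : (volume.restrict Ω).map θ ≤ ENNReal.ofReal W • volume := by
    rw [hdens, ← withDensity_const]
    exact withDensity_mono (hwW.mono fun t ht => ENNReal.ofReal_le_ofReal ht)
  rw [← ENNReal.ofReal_rpow_of_nonneg hW0 hpp'_conj.symm.one_div_nonneg]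
  refine eLpNorm_le_of_setIntegral_eq_setIntegral_preimage hθ ENNReal.ofReal_ne_top hθ_map
    hpp'_conj hLp hA.locallyIntegrable fun E hE => ?_
  rw [hAdens E hE, Measure.restrict_restrict (hθ hE), inter_comm]

/-- Abstract `L^p` bridge. If the pushforward `θ_#(dx|Ω)` has a
Lebesgue density `w_θ` bounded by `W`, and `A_θ h` is the Lebesgue density of
`θ_#(h dx)` for `h ∈ L¹ ∩ L^p(Ω)`, then
`‖A_θ h‖_{L^p(ℝ)} ≤ W^{1/p'} ‖h‖_{L^p(Ω)}`. -/
theorem stmt10 {n : ℕ} (Ω : Set (Fin n → ℝ)) (hΩ : MeasurableSet Ω)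
    (θ : (Fin n → ℝ) → ℝ) (hθ : Measurable θ)
    (p p' : ℝ) (hp : 1 < p) (hpp' : 1 / p + 1 / p' = 1)
    (w : ℝ → ℝ) (hwm : Measurable w) (hw0 : ∀ t, 0 ≤ w t)
    (W : ℝ) (hW0 : 0 ≤ W) (hwW : ∀ᵐ t : ℝ, w t ≤ W)
    (hdens : Measure.map θ (volume.restrict Ω)
      = volume.withDensity fun t => ENNReal.ofReal (w t))
    (h : (Fin n → ℝ) → ℂ) (hmeas : Measurable h)
    (h1 : IntegrableOn h Ω)
    (hLp : MemLp h (ENNReal.ofReal p) (volume.restrict Ω))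
    (A : ℝ → ℂ) (hA : Integrable A)
    (hAdens : ∀ E : Set ℝ, MeasurableSet E →
      ∫ t in E, A t = ∫ x in Ω ∩ θ ⁻¹' E, h x) :
    eLpNorm A (ENNReal.ofReal p) volume
      ≤ ENNReal.ofReal (W ^ (1 / p'))
          * eLpNorm h (ENNReal.ofReal p) (volume.restrict Ω) :=
  stmt10_general Ω θ hθ p p' hp hpp' w W hW0 hwW hdens h hLp A hA hAdens
end

section
/- Let Ω ⊂ ℝⁿ be bounded, θ : Ω → ℝ Lipschitz with coarea disintegration, and suppose the critical value set V_θ is finite, w_θ ∈ L^∞_loc(ℝ ∖ V_θ), and w_θ(t) ≤ C_β dist(t, V_θ)^{−β} for a.e. t with dist(t,V_θ) < δ₀, where β ∈ [0,1). Fix δ ∈ (0, δ₀), set U_δ := {t : dist(t, V_θ) < δ}, and let 1 < r < 1 + 1/β. Then for every f ∈ L^r(Ω): (i) ‖w_θ M̃_θ f‖_{L^r(U_δ)}^r ≤ C_β^{r−1} ∫_{θ⁻¹(U_δ)} |f(x)|^r dist(θ(x), V_θ)^{−β(r−1)} dx, and (ii) there exists C_δ < ∞ with ‖w_θ M̃_θ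 f‖_{L^r(ℝ ∖ U_δ)} ≤ C_δ ‖f‖_{L^r(Ω)}. -/
open MeasureTheory Set ENNReal Metric

/-- The coarea fiber integral `∫_{Ω ∩ θ⁻¹(t)} G / |∇θ| dH^{n−1}`. -/
noncomputable def fibInt {n : ℕ} (Ω : Set (Fin n → ℝ)) (θ : (Fin n → ℝ) → ℝ)
    (G : (Fin n → ℝ) → ℝ≥0∞) (t : ℝ) : ℝ≥0∞ :=
  ∫⁻ x in Ω ∩ θ ⁻¹' {t},
    G x * (ENNReal.ofReal ‖fderiv ℝ θ x‖)⁻¹ ∂(μH[(n : ℝ) - 1])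

/-- The pushforward density `w_θ(t) = ∫_{θ⁻¹(t)} |∇θ|^{−1} dH^{n−1}`. -/
noncomputable def wθ {n : ℕ} (Ω : Set (Fin n → ℝ)) (θ : (Fin n → ℝ) → ℝ)
    (t : ℝ) : ℝ≥0∞ :=
  fibInt Ω θ (fun _ => 1) t

/-- The normalized fiber average `M̃_θ f(t)`, set to `0` when `w_θ(t) ∈ {0, ∞}`. -/
noncomputable def fibAvg {n : ℕ} (Ω : Set (Fin n → ℝ)) (θ : (Fin n → ℝ) → ℝ)
    (f : (Fin n → ℝ) → ℝ) (t : ℝ) : ℝ :=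
  if 0 < wθ Ω θ t ∧ wθ Ω θ t < ⊤ then
    (wθ Ω θ t).toReal⁻¹ *
      ∫ x in Ω ∩ θ ⁻¹' {t}, f x * ‖fderiv ℝ θ x‖⁻¹ ∂(μH[(n : ℝ) - 1])
  else 0

/-!
Hölder's inequality on the fiber `θ⁻¹(t)`, for the measure `|∇θ|⁻¹ dH^{n-1}` of total mass `w_θ(t)`,
gives `|w_θ M̃_θ f (t)|^r ≤ w_θ(t)^{r-1} ∫_{θ⁻¹(t)} |f|^r |∇θ|⁻¹ dH^{n-1}`. On `U_δ` the blow-up bound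
replaces `w_θ^{r-1}` by `C_β^{r-1} dist(t,V)^{-β(r-1)}`; off `U_δ` it is bounded by a constant, since
there only the compact set `closure θ(Ω) ∖ U_δ`, which avoids `V`, carries nonempty fibers. Integrating
in `t`, the coarea formula turns the fiber integrals back into an integral over `Ω`.
-/

lemma lintegral_mul_rpow_le {α : Type*} [MeasurableSpace α] {μ : Measure α}
    {a g : α → ℝ≥0∞} (ha : AEMeasurable a μ) (hg : AEMeasurable g μ) {r : ℝ} (hr : 1 < r) :
    (∫⁻ x, a x * g x ∂μ) ^ r ≤ (∫⁻ x, g x ∂μ) ^ (r - 1) * ∫⁻ x, a x ^ r * g x ∂μ := by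
  have hrq := Real.HolderConjugate.conjExponent hr
  set ν := μ.withDensity g
  have hν : ∀ b : α → ℝ≥0∞, AEMeasurable b μ → ∫⁻ x, b x * g x ∂μ = ∫⁻ x, b x ∂ν := fun b hb => by
    simp_rw [mul_comm _ (g _)]; exact (lintegral_withDensity_eq_lintegral_mul₀ hg hb).symm
  have hW : ∫⁻ x, g x ∂μ = ∫⁻ _, 1 ∂ν := by
    rw [lintegral_one, withDensity_apply _ .univ, Measure.restrict_univ]
  have holder := ENNReal.lintegral_mul_le_Lp_mul_Lq ν hrq
    (ha.mono_ac (withDensity_absolutelyContinuous μ g)) aemeasurable_const (g := 1)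
  simp only [Pi.mul_apply, Pi.one_apply, mul_one, ENNReal.one_rpow] at holder
  rw [hν a ha, hν _ (ha.pow_const r), hW]
  calc (∫⁻ x, a x ∂ν) ^ r
      ≤ ((∫⁻ x, a x ^ r ∂ν) ^ (1 / r) * (∫⁻ _, 1 ∂ν) ^ (1 / r.conjExponent)) ^ r := by
        gcongr
    _ = (∫⁻ _, 1 ∂ν) ^ (r - 1) * ∫⁻ x, a x ^ r ∂ν := by
        rw [ENNReal.mul_rpow_of_nonneg _ _ hrq.nonneg, ← ENNReal.rpow_mul, ← ENNReal.rpow_mul,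
          one_div_mul_cancel hrq.ne_zero, ENNReal.rpow_one, mul_comm, one_div_mul_eq_div,
          hrq.div_conj_eq_sub_one]

lemma ofReal_abs_integral_mul_toReal_rpow_le {α : Type*} [MeasurableSpace α] {μ : Measure α}
    {f : α → ℝ} {g : α → ℝ≥0∞} (hf : AEMeasurable f μ) (hg : AEMeasurable g μ) {r : ℝ}
    (hr : 1 < r) :
    ENNReal.ofReal (|∫ x, f x * (g x).toReal ∂μ| ^ r)
      ≤ (∫⁻ x, g x ∂μ) ^ (r - 1) * ∫⁻ x, ‖f x‖ₑ ^ r * g x ∂μ := by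
  rw [← ENNReal.ofReal_rpow_of_nonneg (abs_nonneg _) (by linarith), ← Real.enorm_eq_ofReal_abs]
  refine le_trans (ENNReal.rpow_le_rpow ?_ (by linarith)) (lintegral_mul_rpow_le hf.enorm hg hr)
  refine (enorm_integral_le_lintegral_enorm _).trans (lintegral_mono fun x => ?_)
  rw [enorm_mul, Real.enorm_of_nonneg ENNReal.toReal_nonneg]
  gcongr
  exact ENNReal.ofReal_toReal_le

lemma ENNReal.ofReal_rpow_le {x : ℝ} (hx : 0 ≤ x) (p : ℝ) :
    ENNReal.ofReal (x ^ p) ≤ ENNReal.ofReal x ^ p := by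
  rcases hx.eq_or_lt with rfl | hx
  · rcases eq_or_ne p 0 with rfl | hp
    · simp
    · simp [Real.zero_rpow hp]
  · exact (ENNReal.ofReal_rpow_of_pos hx).ge

section Fibers

variable {n : ℕ} {Ω : Set (Fin n → ℝ)} {θ : (Fin n → ℝ) → ℝ}

lemma wθ_eq_zero_of_notMem_image {t : ℝ} (ht : t ∉ θ '' Ω) : wθ Ω θ t = 0 := by
  have : Ω ∩ θ ⁻¹' {t} = ∅ := eq_empty_iff_forall_notMem.2 fun x ⟨hx, hxt⟩ => ht ⟨x, hx, hxt⟩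
  rw [wθ, fibInt, this, Measure.restrict_empty, lintegral_zero_measure]

lemma fibInt_mul_comp (hθ : Measurable θ) {G : (Fin n → ℝ) → ℝ≥0∞} (hG : Measurable G)
    (h : ℝ → ℝ≥0∞) (t : ℝ) :
    fibInt Ω θ (fun x => G x * h (θ x)) t = h t * fibInt Ω θ G t := by
  have hm : Measurable fun x => G x * (ENNReal.ofReal ‖fderiv ℝ θ x‖)⁻¹ :=
    hG.mul (measurable_fderiv ℝ θ).norm.ennreal_ofReal.inv
  rw [fibInt, fibInt, ← lintegral_const_mul _ hm]
  refine lintegral_congr_ae ?_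
  filter_upwards [ae_restrict_of_ae_restrict_of_subset inter_subset_right
    (ae_restrict_mem (hθ (measurableSet_singleton t)))] with x hx
  rw [mem_preimage, mem_singleton_iff] at hx
  rw [hx]
  ring

lemma ofReal_abs_wθ_mul_fibAvg_rpow_le {f : (Fin n → ℝ) → ℝ} (hf : Measurable f) {r : ℝ}
    (hr : 1 < r) (t : ℝ) :
    ENNReal.ofReal (|(wθ Ω θ t).toReal * fibAvg Ω θ f t| ^ r)
      ≤ wθ Ω θ t ^ (r - 1) * fibInt Ω θ (fun x => ‖f x‖ₑ ^ r) t := by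
  by_cases hw : 0 < wθ Ω θ t ∧ wθ Ω θ t < ⊤
  · have havg : (wθ Ω θ t).toReal * fibAvg Ω θ f t
        = ∫ x in Ω ∩ θ ⁻¹' {t}, f x * ((ENNReal.ofReal ‖fderiv ℝ θ x‖)⁻¹).toReal
            ∂(μH[(n : ℝ) - 1]) := by
      rw [fibAvg, if_pos hw, ← mul_assoc,
        mul_inv_cancel₀ (ENNReal.toReal_ne_zero.2 ⟨hw.1.ne', hw.2.ne⟩), one_mul]
      simp only [ENNReal.toReal_inv, ENNReal.toReal_ofReal (norm_nonneg _)]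
    rw [havg, wθ, fibInt]
    simp only [one_mul]
    exact ofReal_abs_integral_mul_toReal_rpow_le hf.aemeasurable
      (measurable_fderiv ℝ θ).norm.ennreal_ofReal.inv.aemeasurable hr
  · rw [fibAvg, if_neg hw, mul_zero, abs_zero, Real.zero_rpow (by linarith), ENNReal.ofReal_zero]
    exact zero_le

variable (hθ : Measurable θ)
  (hcoarea : ∀ G : (Fin n → ℝ) → ℝ≥0∞, Measurable G →
    ∫⁻ x in Ω, G x ∂volume = ∫⁻ t : ℝ, fibInt Ω θ G t)
include hθ hcoarea

lemma setLIntegral_wθ_mul_fibAvg_rpow_le {f : (Fin n → ℝ) → ℝ} (hf : Measurable f) {r : ℝ}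
    (hr : 1 < r) {S : Set ℝ} (hS : MeasurableSet S) {h : ℝ → ℝ≥0∞} (hh : Measurable h)
    {c : ℝ≥0∞} (hc : c ≠ ⊤) (hw : ∀ᵐ t, t ∈ S → wθ Ω θ t ^ (r - 1) ≤ c * h t) :
    ∫⁻ t in S, ENNReal.ofReal (|(wθ Ω θ t).toReal * fibAvg Ω θ f t| ^ r)
      ≤ c * ∫⁻ x in Ω ∩ θ ⁻¹' S, ‖f x‖ₑ ^ r * h (θ x) := by
  set G : (Fin n → ℝ) → ℝ≥0∞ := fun x => ‖f x‖ₑ ^ r * S.indicator h (θ x)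
  have hfr : Measurable fun x => ‖f x‖ₑ ^ r := hf.enorm.pow_const r
  have hG : G = (θ ⁻¹' S).indicator fun x => ‖f x‖ₑ ^ r * h (θ x) := by
    ext x
    by_cases hx : θ x ∈ S <;> simp [G, hx]
  calc ∫⁻ t in S, ENNReal.ofReal (|(wθ Ω θ t).toReal * fibAvg Ω θ f t| ^ r)
      ≤ ∫⁻ t in S, c * fibInt Ω θ G t := by
        refine setLIntegral_mono_ae' hS ?_
        filter_upwards [hw] with t hwt ht
        calc _ ≤ wθ Ω θ t ^ (r - 1) * fibInt Ω θ (fun x => ‖f x‖ₑ ^ r) t :=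
              ofReal_abs_wθ_mul_fibAvg_rpow_le hf hr t
          _ ≤ c * h t * fibInt Ω θ (fun x => ‖f x‖ₑ ^ r) t := by gcongr; exact hwt ht
          _ = c * fibInt Ω θ G t := by
              rw [fibInt_mul_comp hθ hfr, indicator_of_mem ht, mul_assoc]
    _ ≤ ∫⁻ t, c * fibInt Ω θ G t := setLIntegral_le_lintegral _ _
    _ = c * ∫⁻ x in Ω, G x := by
        rw [lintegral_const_mul' _ _ hc, hcoarea G (hfr.mul ((hh.indicator hS).comp hθ))]
    _ = c * ∫⁻ x in Ω ∩ θ ⁻¹' S, ‖f x‖ₑ ^ r * h (θ x) := by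
        rw [hG, lintegral_indicator (hθ hS), Measure.restrict_restrict (hθ hS), inter_comm]

lemma setLIntegral_infDist_lt_le {f : (Fin n → ℝ) → ℝ} (hf : Measurable f) {r : ℝ} (hr : 1 < r)
    {V : Set ℝ} {δ₀ Cβ β : ℝ}
    (hblow : ∀ᵐ t : ℝ, infDist t V < δ₀ → wθ Ω θ t ≤ ENNReal.ofReal (Cβ * infDist t V ^ (-β)))
    {δ : ℝ} (hδδ₀ : δ < δ₀) :
    ∫⁻ t in {t : ℝ | infDist t V < δ},
        ENNReal.ofReal (|(wθ Ω θ t).toReal * fibAvg Ω θ f t| ^ r)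
      ≤ ENNReal.ofReal Cβ ^ (r - 1) * ∫⁻ x in Ω ∩ θ ⁻¹' {t : ℝ | infDist t V < δ},
          ‖f x‖ₑ ^ r * ENNReal.ofReal (infDist (θ x) V) ^ (-(β * (r - 1))) := by
  have hr1 : 0 ≤ r - 1 := by linarith
  refine setLIntegral_wθ_mul_fibAvg_rpow_le hθ hcoarea hf hr
    (measurableSet_lt (continuous_infDist_pt V).measurable measurable_const)
    ((continuous_infDist_pt V).measurable.ennreal_ofReal.pow_const _)
    (ENNReal.rpow_ne_top_of_nonneg hr1 ofReal_ne_top) ?_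
  filter_upwards [hblow] with t hwt ht
  have hd := infDist_nonneg (x := t) (s := V)
  calc wθ Ω θ t ^ (r - 1)
      ≤ (ENNReal.ofReal Cβ * ENNReal.ofReal (infDist t V) ^ (-β)) ^ (r - 1) := by
        gcongr
        refine (hwt (lt_trans ht hδδ₀)).trans ?_
        rw [ENNReal.ofReal_mul' (Real.rpow_nonneg hd _)]
        gcongr
        exact ENNReal.ofReal_rpow_le hd _
    _ = ENNReal.ofReal Cβ ^ (r - 1) * ENNReal.ofReal (infDist t V) ^ (-(β * (r - 1))) := by
        rw [ENNReal.mul_rpow_of_nonneg _ _ hr1, ← ENNReal.rpow_mul, neg_mul]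

lemma exists_setLIntegral_infDist_lt_compl_le (hΩθ : Bornology.IsBounded (θ '' Ω)) {r : ℝ}
    (hr : 1 < r) {V : Set ℝ}
    (hloc : ∀ K : Set ℝ, IsCompact K → Disjoint K V →
      ∃ CK : ℝ, ∀ᵐ t : ℝ, t ∈ K → wθ Ω θ t ≤ ENNReal.ofReal CK)
    {δ : ℝ} (hδ : 0 < δ) :
    ∃ C : ℝ≥0∞, C ≠ ⊤ ∧ ∀ f : (Fin n → ℝ) → ℝ, Measurable f →
      ∫⁻ t in {t : ℝ | infDist t V < δ}ᶜ,
          ENNReal.ofReal (|(wθ Ω θ t).toReal * fibAvg Ω θ f t| ^ r)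
        ≤ C * ∫⁻ x in Ω, ‖f x‖ₑ ^ r := by
  have hr1 : 0 ≤ r - 1 := by linarith
  set U := {t : ℝ | infDist t V < δ}
  have hU : IsOpen U := isOpen_lt (continuous_infDist_pt V) continuous_const
  have hKV : Disjoint (closure (θ '' Ω) ∩ Uᶜ) V := disjoint_left.2 fun t ht htV =>
    ht.2 (by simpa [U, infDist_zero_of_mem htV] using hδ)
  obtain ⟨CK, hCK⟩ := hloc _ (hΩθ.isCompact_closure.inter_right hU.isClosed_compl) hKV
  have hC : ENNReal.ofReal CK ^ (r - 1) ≠ ⊤ := ENNReal.rpow_ne_top_of_nonneg hr1 ofReal_ne_top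
  refine ⟨_, hC, fun f hf => ?_⟩
  have hw : ∀ᵐ t, t ∈ Uᶜ → wθ Ω θ t ^ (r - 1) ≤ ENNReal.ofReal CK ^ (r - 1) * 1 := by
    filter_upwards [hCK] with t hwt htU
    rw [mul_one]
    by_cases hT : t ∈ closure (θ '' Ω)
    · exact ENNReal.rpow_le_rpow (hwt ⟨hT, htU⟩) hr1
    · rw [wθ_eq_zero_of_notMem_image fun h => hT (subset_closure h),
        ENNReal.zero_rpow_of_pos (by linarith)]
      exact zero_le
  calc _ ≤ ENNReal.ofReal CK ^ (r - 1) * ∫⁻ x in Ω ∩ θ ⁻¹' Uᶜ, ‖f x‖ₑ ^ r * 1 :=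
        setLIntegral_wθ_mul_fibAvg_rpow_le hθ hcoarea hf hr hU.isClosed_compl.measurableSet
          measurable_const hC hw
    _ ≤ ENNReal.ofReal CK ^ (r - 1) * ∫⁻ x in Ω, ‖f x‖ₑ ^ r := by
        simp only [mul_one]
        gcongr
        exact inter_subset_left

end Fibers

theorem stmt14_general {n : ℕ} (Ω : Set (Fin n → ℝ))
    (hΩb : Bornology.IsBounded Ω)
    (θ : (Fin n → ℝ) → ℝ) (L : NNReal) (hθ : LipschitzWith L θ)
    (hcoarea : ∀ G : (Fin n → ℝ) → ℝ≥0∞, Measurable G →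
      ∫⁻ x in Ω, G x ∂volume = ∫⁻ t : ℝ, fibInt Ω θ G t)
    (V : Finset ℝ)
    (hloc : ∀ K : Set ℝ, IsCompact K → Disjoint K (V : Set ℝ) →
      ∃ CK : ℝ, ∀ᵐ t : ℝ, t ∈ K → wθ Ω θ t ≤ ENNReal.ofReal CK)
    (δ₀ Cβ β : ℝ)
    (hblow : ∀ᵐ t : ℝ, Metric.infDist t (V : Set ℝ) < δ₀ →
      wθ Ω θ t ≤ ENNReal.ofReal (Cβ * Metric.infDist t (V : Set ℝ) ^ (-β)))
    (δ : ℝ) (hδ0 : 0 < δ) (hδδ₀ : δ < δ₀)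
    (r : ℝ) (hr : 1 < r) :
    (∀ f : (Fin n → ℝ) → ℝ, Measurable f →
      ∫⁻ t in {t : ℝ | Metric.infDist t (V : Set ℝ) < δ},
          ENNReal.ofReal (|(wθ Ω θ t).toReal * fibAvg Ω θ f t| ^ r)
        ≤ ENNReal.ofReal Cβ ^ (r - 1) *
            ∫⁻ x in Ω ∩ θ ⁻¹' {t : ℝ | Metric.infDist t (V : Set ℝ) < δ},
              (‖f x‖₊ : ℝ≥0∞) ^ r *
                (ENNReal.ofReal (Metric.infDist (θ x) (V : Set ℝ)))
                  ^ (-(β * (r - 1))) ∂volume) ∧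
    (∃ Cδ : ℝ≥0∞, Cδ ≠ ⊤ ∧ ∀ f : (Fin n → ℝ) → ℝ, Measurable f →
      ∫⁻ t in {t : ℝ | Metric.infDist t (V : Set ℝ) < δ}ᶜ,
          ENNReal.ofReal (|(wθ Ω θ t).toReal * fibAvg Ω θ f t| ^ r)
        ≤ Cδ * ∫⁻ x in Ω, (‖f x‖₊ : ℝ≥0∞) ^ r ∂volume) := by
  have hθm : Measurable θ := hθ.continuous.measurable
  exact ⟨fun f hf => setLIntegral_infDist_lt_le hθm hcoarea hf hr hblow hδδ₀,
    exists_setLIntegral_infDist_lt_compl_le hθm hcoarea (hθ.isBounded_image hΩb) hr hloc hδ0⟩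

/-- Critical regime with localization. If `Ω` is bounded, the critical
value set `V` is finite, `w_θ ∈ L^∞_loc(ℝ ∖ V)`, and `w_θ(t) ≤ C_β dist(t,V)^{−β}`
a.e. near `V` with `β ∈ [0,1)`, then for `δ ∈ (0,δ₀)`, `U_δ = {dist(·,V) < δ}` and
`1 < r < 1 + 1/β`:
(i) `‖w_θ M̃_θ f‖_{L^r(U_δ)}^r ≤ C_β^{r−1} ∫_{θ⁻¹(U_δ)} |f|^r dist(θ(x),V)^{−β(r−1)}`;
(ii) there is `C_δ < ∞` with
`‖w_θ M̃_θ f‖_{L^r(ℝ∖U_δ)}^r ≤ C_δ ∫_Ω |f|^r`, uniformly in `f`. -/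
theorem stmt14 {n : ℕ} (Ω : Set (Fin n → ℝ)) (hΩ : MeasurableSet Ω)
    (hΩb : Bornology.IsBounded Ω)
    (θ : (Fin n → ℝ) → ℝ) (L : NNReal) (hθ : LipschitzWith L θ)
    (hgrad : ∀ᵐ x ∂(volume.restrict Ω), fderiv ℝ θ x ≠ 0)
    (hcoarea : ∀ G : (Fin n → ℝ) → ℝ≥0∞, Measurable G →
      ∫⁻ x in Ω, G x ∂volume = ∫⁻ t : ℝ, fibInt Ω θ G t)
    (V : Finset ℝ) (hV : V.Nonempty)
    (hloc : ∀ K : Set ℝ, IsCompact K → Disjoint K (V : Set ℝ) →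
      ∃ CK : ℝ, ∀ᵐ t : ℝ, t ∈ K → wθ Ω θ t ≤ ENNReal.ofReal CK)
    (δ₀ Cβ β : ℝ) (hδ₀ : 0 < δ₀) (hCβ : 0 ≤ Cβ) (hβ0 : 0 ≤ β) (hβ1 : β < 1)
    (hblow : ∀ᵐ t : ℝ, Metric.infDist t (V : Set ℝ) < δ₀ →
      wθ Ω θ t ≤ ENNReal.ofReal (Cβ * Metric.infDist t (V : Set ℝ) ^ (-β)))
    (δ : ℝ) (hδ0 : 0 < δ) (hδδ₀ : δ < δ₀)
    (r : ℝ) (hr : 1 < r) (hrβ : β * (r - 1) < 1) :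
    (∀ f : (Fin n → ℝ) → ℝ, Measurable f →
      ∫⁻ t in {t : ℝ | Metric.infDist t (V : Set ℝ) < δ},
          ENNReal.ofReal (|(wθ Ω θ t).toReal * fibAvg Ω θ f t| ^ r)
        ≤ ENNReal.ofReal Cβ ^ (r - 1) *
            ∫⁻ x in Ω ∩ θ ⁻¹' {t : ℝ | Metric.infDist t (V : Set ℝ) < δ},
              (‖f x‖₊ : ℝ≥0∞) ^ r *
                (ENNReal.ofReal (Metric.infDist (θ x) (V : Set ℝ)))
                  ^ (-(β * (r - 1))) ∂volume) ∧
    (∃ Cδ : ℝ≥0∞, Cδ ≠ ⊤ ∧ ∀ f : (Fin n → ℝ) → ℝ, Measurable f →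
      ∫⁻ t in {t : ℝ | Metric.infDist t (V : Set ℝ) < δ}ᶜ,
          ENNReal.ofReal (|(wθ Ω θ t).toReal * fibAvg Ω θ f t| ^ r)
        ≤ Cδ * ∫⁻ x in Ω, (‖f x‖₊ : ℝ≥0∞) ^ r ∂volume) :=
  stmt14_general Ω hΩb θ L hθ hcoarea V hloc δ₀ Cβ β hblow δ hδ0 hδδ₀ r hr
end
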